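/- arXiv:1707.00739 — 2 statements merged into one kernel-verified Lean document; each statement's English description precedes it below -/
import Mathlib

section
/- Let G be a group with commutator [a,b] = a⁻¹ b⁻¹ a b, and let α, β ∈ G. Define c₁ = [β,α] and c_{j+1} = [c_j, α]. Suppose the elements c_j (j ≥ 1) pairwise commute. Then for every natural number n ≥ 1, ∏_{i=1}^{n-1} [β, αⁱ] = ∏_{j=1}^{n-1} c_j^{C(n, j+1)}. -/
def gcomm {G : Type*} [Group G] (a b : G) : G := a⁻¹ * b⁻¹ * a * b

/-
Conjugation by `α` acts on the abelian group generated by the `c j` as `c j ↦ c j * c (j + 1)`.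
Since `[β, α ^ (m + 1)] = c 1 * α⁻¹ [β, α ^ m] α`, induction on `m` with Pascal's rule gives
`[β, α ^ m] = ∏_{i < m} c (i + 1) ^ C(m, i + 1)`; multiplying these over `m < n` and applying
Pascal's rule once more (the hockey-stick identity) turns the exponents into `C(n, j + 2)`.
-/

open Finset
open scoped IsMulCommutative

section Binomial

variable {M : Type*} [CommMonoid M]

def chooseProd (d : ℕ → M) (m : ℕ) : M :=
  ∏ i ∈ range m, d i ^ m.choose (i + 1)

theorem prod_range_succ_pow_choose_add (d : ℕ → M) {n N j : ℕ} (h : n < N + j) :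
    ∏ i ∈ range (N + 1), d i ^ n.choose (i + j) = ∏ i ∈ range N, d i ^ n.choose (i + j) := by
  rw [prod_range_succ, Nat.choose_eq_zero_of_lt h, pow_zero, mul_one]

theorem mul_map_chooseProd (φ : M →* M) (d : ℕ → M) (hφ : ∀ i, φ (d i) = d i * d (i + 1))
    (m : ℕ) : d 0 * φ (chooseProd d m) = chooseProd d (m + 1) := by
  simp only [chooseProd, map_prod, map_pow, hφ, mul_pow, prod_mul_distrib]
  rw [← prod_range_succ_pow_choose_add d (N := m) (j := 1) (by omega)]
  simp only [Nat.choose_succ_succ', pow_add, prod_mul_distrib]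
  rw [prod_range_succ' (fun i => d i ^ m.choose i)]
  simp only [Nat.choose_zero_right, pow_one]
  ac_rfl

theorem prod_range_chooseProd (d : ℕ → M) (k : ℕ) :
    ∏ m ∈ range (k + 1), chooseProd d m = ∏ i ∈ range k, d i ^ (k + 1).choose (i + 2) := by
  induction k with
  | zero => simp [chooseProd]
  | succ k ih =>
    rw [prod_range_succ, ih, chooseProd, ← prod_range_succ_pow_choose_add d (N := k) (by omega)]
    simp only [Nat.choose_succ_succ' (k + 1), pow_add, prod_mul_distrib]
    ac_rfl

end Binomial

theorem map_prod_range_eq_list_prod {M N : Type*} [CommMonoid M] [Monoid N]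
    (f : M →* N) (g : ℕ → M) (n : ℕ) :
    f (∏ i ∈ range n, g i) = ((List.range n).map fun i => f (g i)).prod := by
  rw [prod_eq_multiset_prod, range_val, Multiset.range, Multiset.map_coe, Multiset.prod_coe,
    map_list_prod, List.map_map]
  rfl

section Group

variable {G : Type*} [Group G]

theorem inv_mul_mul_eq_mul_gcomm (a x : G) : a⁻¹ * x * a = x * gcomm x a := by
  simp only [gcomm]
  group

theorem gcomm_pow_succ (α β : G) (m : ℕ) :
    gcomm β (α ^ (m + 1)) = gcomm β α * (α⁻¹ * gcomm β (α ^ m) * α) := by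
  simp only [gcomm]
  rw [pow_succ]
  group

theorem Subgroup.conj_mem_closure {S : Set G} {g : G} (hS : ∀ s ∈ S, g⁻¹ * s * g ∈ closure S)
    {x : G} (hx : x ∈ closure S) : g⁻¹ * x * g ∈ closure S := by
  have hmap : (closure S).map (MulAut.conj g⁻¹).toMonoidHom ≤ closure S := by
    rw [MonoidHom.map_closure, closure_le]
    rintro _ ⟨s, hs, rfl⟩
    simpa using hS s hs
  simpa using hmap (mem_map_of_mem _ hx)

theorem gcomm_pow_eq_chooseProd {H : Subgroup G} [IsMulCommutative H] {α β : G}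
    (hH : ∀ x ∈ H, α⁻¹ * x * α ∈ H) (d : ℕ → H) (hd₀ : (d 0 : G) = gcomm β α)
    (hd : ∀ j, α⁻¹ * d j * α = d j * d (j + 1)) (m : ℕ) :
    gcomm β (α ^ m) = chooseProd d m := by
  let φ : H →* H := ((MulAut.conj α⁻¹).toMonoidHom.comp H.subtype).codRestrict H fun x => by
    simpa using hH x x.2
  have hφ (j : ℕ) : φ (d j) = d j * d (j + 1) := Subtype.ext <| by simpa [φ] using hd j
  induction m with
  | zero => simp [gcomm, chooseProd]
  | succ m ih =>
    rw [gcomm_pow_succ, ih, ← mul_map_chooseProd φ d hφ m]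
    simp [φ, hd₀]

end Group

theorem stmt_7_general {G : Type*} [Group G] (α β : G) (c : ℕ → G)
    (hc1 : c 1 = gcomm β α)
    (hcrec : ∀ j : ℕ, 1 ≤ j → c (j + 1) = gcomm (c j) α)
    (hcomm : ∀ i j : ℕ, 1 ≤ i → 1 ≤ j → Commute (c i) (c j))
    (n : ℕ) :
    ((List.range (n - 1)).map (fun i => gcomm β (α ^ (i + 1)))).prod =
      ((List.range (n - 1)).map (fun j => (c (j + 1)) ^ (Nat.choose n (j + 2)))).prod := by
  let H := Subgroup.closure (Set.range fun j => c (j + 1))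
  have : IsMulCommutative H := Subgroup.isMulCommutative_closure <| by
    rintro _ ⟨i, rfl⟩ _ ⟨j, rfl⟩
    exact hcomm _ _ i.succ_pos j.succ_pos
  let d (j : ℕ) : H := ⟨c (j + 1), Subgroup.subset_closure ⟨j, rfl⟩⟩
  have hd (j : ℕ) : α⁻¹ * d j * α = d j * d (j + 1) := by
    rw [inv_mul_mul_eq_mul_gcomm, ← hcrec (j + 1) j.succ_pos]
  have hH (x : G) (hx : x ∈ H) : α⁻¹ * x * α ∈ H := by
    refine Subgroup.conj_mem_closure ?_ hx
    rintro _ ⟨j, rfl⟩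
    exact hd j ▸ mul_mem (d j).2 (d (j + 1)).2
  rcases n with _ | k
  · simp
  have hprod :
      ∏ i ∈ range k, chooseProd d (i + 1) = ∏ i ∈ range k, d i ^ (k + 1).choose (i + 2) := by
    rw [← prod_range_chooseProd, prod_range_succ']
    simp [chooseProd]
  have := congrArg H.subtype hprod
  rw [map_prod_range_eq_list_prod, map_prod_range_eq_list_prod] at this
  simpa [gcomm_pow_eq_chooseProd hH d hc1 hd] using this

theorem stmt_7 {G : Type*} [Group G] (α β : G) (c : ℕ → G)
    (hc1 : c 1 = gcomm β α)
    (hcrec : ∀ j : ℕ, 1 ≤ j → c (j + 1) = gcomm (c j) α)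
    (hcomm : ∀ i j : ℕ, 1 ≤ i → 1 ≤ j → Commute (c i) (c j))
    (n : ℕ) (hn : 1 ≤ n) :
    ((List.range (n - 1)).map (fun i => gcomm β (α ^ (i + 1)))).prod =
      ((List.range (n - 1)).map (fun j => (c (j + 1)) ^ (Nat.choose n (j + 2)))).prod :=
  stmt_7_general α β c hc1 hcrec hcomm n
end

section
/- Let G be a group with commutator [a,b] = a⁻¹ b⁻¹ a b, and let β, α, f ∈ G. Suppose that β commutes with [β,αⁱ] for all i ≥ 1 and the [β,αⁱ] pairwise commute. Then for any n ≥ 1 and any j with 1 ≤ j ≤ n, if βⁿ = 1 and each [β,αⁱ] has order dividing n, then (α·β)ⁿ = αⁿ · ∏_{i=1}^{n-1}[β,αⁱ]. -/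
section

variable {G : Type*} [Group G]

@[simp]
lemma gcomm_one_right (a : G) : gcomm a 1 = 1 := by
  simp [gcomm]

lemma mul_eq_mul_mul_gcomm (a b : G) : b * a = a * b * gcomm b a := by
  simp only [gcomm]
  group

lemma mul_pow_eq_pow_mul_pow_mul_prod_gcomm (α β : G)
    (hβ : ∀ i, Commute β (gcomm β (α ^ i)))
    (hcomm : ∀ i j, Commute (gcomm β (α ^ i)) (gcomm β (α ^ j))) (n : ℕ) :
    (α * β) ^ n = α ^ n * β ^ n * ((List.range n).map fun i => gcomm β (α ^ i)).prod := by
  induction n with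
  | zero => simp
  | succ n ih =>
    generalize hP : ((List.range n).map fun i => gcomm β (α ^ i)).prod = P at ih
    have hcP : Commute (gcomm β (α ^ n)) P := hP ▸ Commute.list_prod_right _ _ fun y hy => by
      obtain ⟨i, -, rfl⟩ := List.mem_map.mp hy
      exact hcomm n i
    calc (α * β) ^ (n + 1) = α * (β * α ^ n) * β ^ n * P := by
          rw [pow_succ', ih]; group
      _ = α ^ (n + 1) * β * (gcomm β (α ^ n) * β ^ n) * P := by
          rw [mul_eq_mul_mul_gcomm (α ^ n) β]; group
      _ = α ^ (n + 1) * β ^ (n + 1) * (P * gcomm β (α ^ n)) := by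
          rw [← ((hβ n).pow_left n).eq, ← hcP.eq, pow_succ' β n]; simp only [mul_assoc]
      _ = _ := by
          rw [List.range_succ, List.map_append, List.prod_append, hP]; simp

end

theorem stmt_14_general {G : Type*} [Group G] (β α : G)
    (h1 : ∀ i : ℕ, 1 ≤ i → Commute β (gcomm β (α ^ i)))
    (h2 : ∀ i j : ℕ, 1 ≤ i → 1 ≤ j → Commute (gcomm β (α ^ i)) (gcomm β (α ^ j)))
    (n j : ℕ)
    (hβ : β ^ n = 1) :
    (α * β) ^ n = α ^ n * ((List.range (n - 1)).map (fun i => gcomm β (α ^ (i + 1)))).prod := by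
  have hβc (i : ℕ) : Commute β (gcomm β (α ^ i)) := by
    rcases Nat.eq_zero_or_pos i with rfl | hi
    · simp
    · exact h1 i hi
  have hcomm (i j : ℕ) : Commute (gcomm β (α ^ i)) (gcomm β (α ^ j)) := by
    rcases Nat.eq_zero_or_pos i with rfl | hi
    · simp
    rcases Nat.eq_zero_or_pos j with rfl | hj
    · simp
    exact h2 i j hi hj
  rw [mul_pow_eq_pow_mul_pow_mul_prod_gcomm α β hβc hcomm, hβ, mul_one]
  cases n with
  | zero => simp
  | succ m => simp [List.range_succ_eq_map, Function.comp_def]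

theorem stmt_14 {G : Type*} [Group G] (β α f : G)
    (h1 : ∀ i : ℕ, 1 ≤ i → Commute β (gcomm β (α ^ i)))
    (h2 : ∀ i j : ℕ, 1 ≤ i → 1 ≤ j → Commute (gcomm β (α ^ i)) (gcomm β (α ^ j)))
    (n j : ℕ) (hn : 1 ≤ n) (hj1 : 1 ≤ j) (hj2 : j ≤ n)
    (hβ : β ^ n = 1) (hord : ∀ i : ℕ, 1 ≤ i → (gcomm β (α ^ i)) ^ n = 1) :
    (α * β) ^ n = α ^ n * ((List.range (n - 1)).map (fun i => gcomm β (α ^ (i + 1)))).prod :=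
  stmt_14_general β α h1 h2 n j hβ
end
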